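/- Let C ↠ B be an A-Galois coextension. Then ψ := (τ̌ ⊗ C) ∘ (C ⊗ Δ) ∘ cocan : C ⊗ A → A ⊗ C, i.e. ψ(c ⊗ a) = τ̌(c_{(1)} ⊗ μ_C(c_{(2)},a)_{(1)}) ⊗ μ_C(c_{(2)},a)_{(2)}, is an entwining map: it satisfies ψ∘(C⊗m)=(m⊗C)∘(A⊗ψ)∘(ψ⊗A), ψ∘(C⊗η)=η⊗C, (A⊗Δ)∘ψ=(ψ⊗C)∘(C⊗ψ)∘(Δ⊗A), and (A⊗ε)∘ψ=ε⊗A. -/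

import Mathlib

open TensorProduct LinearMap Coalgebra

variable {k A C : Type*} [Field k] [Ring A] [Algebra k A]
  [AddCommGroup C] [Module k C] [Coalgebra k C]

/-- `μ : C ⊗ A → C` is a unital, associative right `A`-action on `C`. -/
def IsAction (μ : C ⊗[k] A →ₗ[k] C) : Prop :=
  (∀ c : C, μ (c ⊗ₜ[k] (1 : A)) = c)
  ∧ (∀ (c : C) (a a' : A), μ (μ (c ⊗ₜ[k] a) ⊗ₜ[k] a') = μ (c ⊗ₜ[k] (a * a')))

/-- Action by a fixed element `a ∈ A`: `c ↦ μ(c ⊗ a)`. -/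
noncomputable def actBy (μ : C ⊗[k] A →ₗ[k] C) (a : A) : C →ₗ[k] C :=
  μ ∘ₗ (TensorProduct.mk k C A).flip a

/-- The subspace `I` of Lemma 3.2: the span of all
`μ(c,a)₍₁₎ α(μ(c,a)₍₂₎) − c₍₁₎ α(μ(c₍₂₎,a))` for `a ∈ A`, `c ∈ C`, `α ∈ Hom(C,k)`. -/
noncomputable def coidealI (μ : C ⊗[k] A →ₗ[k] C) : Submodule k C :=
  Submodule.span k {x : C | ∃ (a : A) (c : C) (α : C →ₗ[k] k), x =
    TensorProduct.rid k C (α.lTensor C (comul (R := k) (μ (c ⊗ₜ[k] a))))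
      - TensorProduct.rid k C ((α ∘ₗ actBy μ a).lTensor C (comul (R := k) c))}

/-- `(π ⊗ C) ∘ Δ : C → B ⊗ C`, where `B = C / I` and `π` the quotient map. -/
noncomputable def coactL (μ : C ⊗[k] A →ₗ[k] C) :
    C →ₗ[k] (C ⧸ coidealI μ) ⊗[k] C :=
  (coidealI μ).mkQ.rTensor C ∘ₗ comul (R := k)

/-- `(C ⊗ π) ∘ Δ : C → C ⊗ B`. -/
noncomputable def coactR (μ : C ⊗[k] A →ₗ[k] C) :
    C →ₗ[k] C ⊗[k] (C ⧸ coidealI μ) :=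
  (coidealI μ).mkQ.lTensor C ∘ₗ comul (R := k)

/-- The coaction-equalising map `C ⊗ C → C ⊗ B ⊗ C` whose kernel is the
cotensor product `C □_B C`. -/
noncomputable def cotensorEq (μ : C ⊗[k] A →ₗ[k] C) :
    C ⊗[k] C →ₗ[k] C ⊗[k] ((C ⧸ coidealI μ) ⊗[k] C) :=
  ((TensorProduct.assoc k C (C ⧸ coidealI μ) C).toLinearMap ∘ₗ (coactR μ).rTensor C)
    - (coactL μ).lTensor C

/-- The cotensor product `C □_B C ⊆ C ⊗ C`. -/
noncomputable def cotensor (μ : C ⊗[k] A →ₗ[k] C) : Submodule k (C ⊗[k] C) :=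
  LinearMap.ker (cotensorEq μ)

/-- The canonical map `cocan = (C ⊗ μ) ∘ (Δ ⊗ A) : C ⊗ A → C ⊗ C`
(taking values in `C □_B C`). -/
noncomputable def cocanF (μ : C ⊗[k] A →ₗ[k] C) : C ⊗[k] A →ₗ[k] C ⊗[k] C :=
  μ.lTensor C ∘ₗ (TensorProduct.assoc k C C A).toLinearMap
    ∘ₗ (comul (R := k) (A := C)).rTensor A

/-- `σ` is an inverse of `cocan` regarded as a map onto `C □_B C`, i.e. the
coextension `C ↠ B` is `A`-Galois. -/
def IsCocanInverse (μ : C ⊗[k] A →ₗ[k] C) (σ : C ⊗[k] C →ₗ[k] C ⊗[k] A) : Prop :=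
  (LinearMap.range (cocanF μ) ≤ cotensor μ)
  ∧ (σ ∘ₗ cocanF μ = LinearMap.id)
  ∧ (∀ x ∈ cotensor μ, cocanF μ (σ x) = x)

/-- The cotranslation map `τ̌ = (ε ⊗ A) ∘ cocan⁻¹ : C □_B C → A`, expressed via a
linear extension `σ` of `cocan⁻¹`. -/
noncomputable def cotrans (σ : C ⊗[k] C →ₗ[k] C ⊗[k] A) : C ⊗[k] C →ₗ[k] A :=
  (TensorProduct.lid k A).toLinearMap ∘ₗ (counit (R := k) (A := C)).rTensor A ∘ₗ σ

/-- The four axioms of an entwining structure `(A, C, ψ)`. -/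
def IsEntwining (ψ : C ⊗[k] A →ₗ[k] A ⊗[k] C) : Prop :=
  (ψ ∘ₗ (LinearMap.mul' k A).lTensor C ∘ₗ (TensorProduct.assoc k C A A).toLinearMap
      = (LinearMap.mul' k A).rTensor C ∘ₗ (TensorProduct.assoc k A A C).symm.toLinearMap
        ∘ₗ ψ.lTensor A ∘ₗ (TensorProduct.assoc k A C A).toLinearMap ∘ₗ ψ.rTensor A)
  ∧ (∀ c : C, ψ (c ⊗ₜ[k] (1 : A)) = (1 : A) ⊗ₜ[k] c)
  ∧ ((comul (R := k) (A := C)).lTensor A ∘ₗ ψ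
      = (TensorProduct.assoc k A C C).toLinearMap ∘ₗ ψ.rTensor C
        ∘ₗ (TensorProduct.assoc k C A C).symm.toLinearMap ∘ₗ ψ.lTensor C
        ∘ₗ (TensorProduct.assoc k C C A).toLinearMap ∘ₗ (comul (R := k) (A := C)).rTensor A)
  ∧ ((TensorProduct.rid k A).toLinearMap ∘ₗ (counit (R := k) (A := C)).lTensor A ∘ₗ ψ
      = (TensorProduct.lid k A).toLinearMap ∘ₗ (counit (R := k) (A := C)).rTensor A)

/-- The canonical entwining map `ψ = (τ̌ ⊗ C) ∘ (C ⊗ Δ) ∘ cocan` of an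
`A`-Galois coextension. -/
noncomputable def cocanPsi (μ : C ⊗[k] A →ₗ[k] C) (σ : C ⊗[k] C →ₗ[k] C ⊗[k] A) :
    C ⊗[k] A →ₗ[k] A ⊗[k] C :=
  (cotrans σ).rTensor C ∘ₗ (TensorProduct.assoc k C C C).symm.toLinearMap
    ∘ₗ (comul (R := k) (A := C)).lTensor C ∘ₗ cocanF μ
section Aux
namespace GaloisCoext

variable {k A C : Type*} [Field k] [Ring A] [Algebra k A]
  [AddCommGroup C] [Module k C] [Coalgebra k C]

/-- coassoc transport through an arbitrary linear map on triple tensors -/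
lemma repr_coassoc {W : Type*} [AddCommGroup W] [Module k W]
    (M : C ⊗[k] (C ⊗[k] C) →ₗ[k] W) {c : C} (r : Coalgebra.Repr k c (C × C))
    (rl : ∀ i, Coalgebra.Repr k (r.left i) (C × C)) (rr : ∀ i, Coalgebra.Repr k (r.right i) (C × C)) :
    ∑ i ∈ r.index, ∑ j ∈ (rl i).index,
        M ((rl i).left j ⊗ₜ[k] ((rl i).right j ⊗ₜ[k] r.right i))
      = ∑ i ∈ r.index, ∑ j ∈ (rr i).index,
        M (r.left i ⊗ₜ[k] ((rr i).left j ⊗ₜ[k] (rr i).right j)) := by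
  have h := Coalgebra.sum_tmul_tmul_eq r rl rr
  have := congrArg M h
  simpa [map_sum] using this

lemma repr_counit_right {W : Type*} [AddCommGroup W] [Module k W]
    (M : C →ₗ[k] W) {c : C} (r : Coalgebra.Repr k c (C × C)) :
    ∑ i ∈ r.index, counit (R := k) (r.right i) • M (r.left i) = M c := by
  have h := Coalgebra.sum_tmul_counit_eq r
  have := congrArg ((TensorProduct.rid k C).toLinearMap ∘ₗ (counit (R := k)).lTensor C) h
  simp only [map_sum, coe_comp, LinearEquiv.coe_coe, Function.comp_apply, lTensor_tmul,
    rid_tmul] at this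
  have := congrArg M this
  simp only [map_sum, map_smul] at this
  simpa [smul_comm] using this

lemma repr_counit_left {W : Type*} [AddCommGroup W] [Module k W]
    (M : C →ₗ[k] W) {c : C} (r : Coalgebra.Repr k c (C × C)) :
    ∑ i ∈ r.index, counit (R := k) (r.left i) • M (r.right i) = M c := by
  have h := Coalgebra.sum_counit_tmul_eq r
  have := congrArg ((TensorProduct.lid k C).toLinearMap ∘ₗ (counit (R := k)).rTensor C) h
  simp only [map_sum, coe_comp, LinearEquiv.coe_coe, Function.comp_apply, rTensor_tmul,
    lid_tmul] at this
  have := congrArg M this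
  simp only [map_sum, map_smul] at this
  simpa using this

variable (μ : C ⊗[k] A →ₗ[k] C) (σ : C ⊗[k] C →ₗ[k] C ⊗[k] A)

/-- `(C ⊗ Δ)` followed by reassociation: `x ⊗ y ↦ (x ⊗ y₁) ⊗ y₂`. -/
noncomputable def Tmap : C ⊗[k] C →ₗ[k] (C ⊗[k] C) ⊗[k] C :=
  (TensorProduct.assoc k C C C).symm.toLinearMap ∘ₗ (comul (R := k)).lTensor C

/-- `x ⊗ y ↦ x₁ ⊗ τ̌(x₂ ⊗ y)`, a linear extension of `σ` on the cotensor product. -/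
noncomputable def Kmap : C ⊗[k] C →ₗ[k] C ⊗[k] A :=
  (cotrans σ).lTensor C ∘ₗ (TensorProduct.assoc k C C C).toLinearMap
    ∘ₗ (comul (R := k)).rTensor C

lemma Tmap_tmul (x y : C) (ry : Coalgebra.Repr k y (C × C)) :
    Tmap (x ⊗ₜ[k] y) = ∑ j ∈ ry.index, (x ⊗ₜ[k] ry.left j) ⊗ₜ[k] ry.right j := by
  simp only [Tmap, coe_comp, LinearEquiv.coe_coe, Function.comp_apply, lTensor_tmul]
  rw [← ry.eq]
  simp [tmul_sum, map_sum]

lemma Kmap_tmul (x y : C) (rx : Coalgebra.Repr k x (C × C)) :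
    Kmap σ (x ⊗ₜ[k] y)
      = ∑ i ∈ rx.index, rx.left i ⊗ₜ[k] cotrans σ (rx.right i ⊗ₜ[k] y) := by
  simp only [Kmap, coe_comp, LinearEquiv.coe_coe, Function.comp_apply, rTensor_tmul]
  rw [← rx.eq]
  simp [sum_tmul, map_sum]

lemma can_tmul (c : C) (a : A) (r : Coalgebra.Repr k c (C × C)) :
    cocanF μ (c ⊗ₜ[k] a)
      = ∑ i ∈ r.index, r.left i ⊗ₜ[k] μ (r.right i ⊗ₜ[k] a) := by
  simp only [cocanF, coe_comp, LinearEquiv.coe_coe, Function.comp_apply, rTensor_tmul]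
  rw [← r.eq]
  simp [sum_tmul, map_sum]

lemma psi_eq : cocanPsi μ σ = (cotrans σ).rTensor C ∘ₗ Tmap ∘ₗ cocanF μ := rfl

lemma psi_tmul (c : C) (a : A) (r : Coalgebra.Repr k c (C × C))
    (rm : ∀ i, Coalgebra.Repr k (μ (r.right i ⊗ₜ[k] a)) (C × C)) :
    cocanPsi μ σ (c ⊗ₜ[k] a)
      = ∑ i ∈ r.index, ∑ j ∈ (rm i).index,
          cotrans σ (r.left i ⊗ₜ[k] (rm i).left j) ⊗ₜ[k] (rm i).right j := by
  rw [psi_eq]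
  simp only [coe_comp, Function.comp_apply, can_tmul μ c a r, map_sum]
  refine Finset.sum_congr rfl fun i _ => ?_
  rw [Tmap_tmul _ _ (rm i)]
  simp only [map_sum, rTensor_tmul]

end GaloisCoext
end Aux
section B2
namespace GaloisCoext

variable {k A C : Type*} [Field k] [Ring A] [Algebra k A]
  [AddCommGroup C] [Module k C] [Coalgebra k C]
variable (μ : C ⊗[k] A →ₗ[k] C) (σ : C ⊗[k] C →ₗ[k] C ⊗[k] A)

lemma tau_can_map (hσ : IsCocanInverse μ σ) :
    cotrans σ ∘ₗ cocanF μ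
      = (TensorProduct.lid k A).toLinearMap ∘ₗ (counit (R := k) (A := C)).rTensor A := by
  rw [cotrans, comp_assoc, comp_assoc, hσ.2.1]
  rfl

lemma tau_can (hσ : IsCocanInverse μ σ) (c : C) (a : A) :
    cotrans σ (cocanF μ (c ⊗ₜ[k] a)) = counit (R := k) c • a := by
  have := congrFun (congrArg DFunLike.coe (tau_can_map μ σ hσ)) (c ⊗ₜ[k] a)
  simpa using this

lemma Kmap_can (hμ : IsAction μ) (hσ : IsCocanInverse μ σ) (c : C) (a : A) :
    Kmap σ (cocanF μ (c ⊗ₜ[k] a)) = c ⊗ₜ[k] a := by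
  classical
  set r := Coalgebra.Repr.arbitrary k c with hr
  set rl : ∀ i, Coalgebra.Repr k (r.left i) (C × C) := fun i => Coalgebra.Repr.arbitrary k _
  set rr : ∀ i, Coalgebra.Repr k (r.right i) (C × C) := fun i => Coalgebra.Repr.arbitrary k _
  rw [can_tmul μ c a r, map_sum]
  have step1 : ∀ i ∈ r.index,
      Kmap σ (r.left i ⊗ₜ[k] μ (r.right i ⊗ₜ[k] a))
        = ∑ j ∈ (rl i).index,
            (rl i).left j ⊗ₜ[k] cotrans σ ((rl i).right j ⊗ₜ[k] μ (r.right i ⊗ₜ[k] a)) :=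
    fun i _ => Kmap_tmul σ _ _ (rl i)
  rw [Finset.sum_congr rfl step1]
  set M : C ⊗[k] (C ⊗[k] C) →ₗ[k] C ⊗[k] A :=
    (cotrans σ ∘ₗ (actBy μ a).lTensor C).lTensor C with hM
  have hMv : ∀ x y z : C,
      M (x ⊗ₜ[k] (y ⊗ₜ[k] z)) = x ⊗ₜ[k] cotrans σ (y ⊗ₜ[k] μ (z ⊗ₜ[k] a)) := by
    intro x y z
    simp [hM, actBy]
  calc
    ∑ i ∈ r.index, ∑ j ∈ (rl i).index,
        (rl i).left j ⊗ₜ[k] cotrans σ ((rl i).right j ⊗ₜ[k] μ (r.right i ⊗ₜ[k] a))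
      = ∑ i ∈ r.index, ∑ j ∈ (rl i).index,
          M ((rl i).left j ⊗ₜ[k] ((rl i).right j ⊗ₜ[k] r.right i)) := by
        simp [hMv]
    _ = ∑ i ∈ r.index, ∑ j ∈ (rr i).index,
          M (r.left i ⊗ₜ[k] ((rr i).left j ⊗ₜ[k] (rr i).right j)) :=
        repr_coassoc M r rl rr
    _ = ∑ i ∈ r.index,
          r.left i ⊗ₜ[k] cotrans σ (cocanF μ (r.right i ⊗ₜ[k] a)) := by
        refine Finset.sum_congr rfl fun i _ => ?_
        rw [can_tmul μ _ a (rr i)]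
        simp [hMv, tmul_sum, map_sum]
    _ = ∑ i ∈ r.index, counit (R := k) (r.right i) •
          (((TensorProduct.mk k C A).flip a) (r.left i)) := by
        refine Finset.sum_congr rfl fun i _ => ?_
        rw [tau_can μ σ hσ]
        simp [TensorProduct.tmul_smul, TensorProduct.smul_tmul']
    _ = c ⊗ₜ[k] a := by rw [repr_counit_right]; rfl

lemma Kmap_can_map (hμ : IsAction μ) (hσ : IsCocanInverse μ σ) :
    Kmap σ ∘ₗ cocanF μ = LinearMap.id := by
  apply TensorProduct.ext'
  intro c a
  simpa using Kmap_can μ σ hμ hσ c a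

lemma can_Kmap_of_mem (hμ : IsAction μ) (hσ : IsCocanInverse μ σ)
    {x : C ⊗[k] C} (hx : x ∈ cotensor μ) : cocanF μ (Kmap σ x) = x := by
  have h1 : x = cocanF μ (σ x) := (hσ.2.2 x hx).symm
  have h2 : Kmap σ x = σ x := by
    conv_lhs => rw [h1]
    have := congrFun (congrArg DFunLike.coe (Kmap_can_map μ σ hμ hσ)) (σ x)
    simpa using this
  rw [h2]; exact hσ.2.2 x hx

/-- flatness lifting: `can ∘ K` is the identity on `ker (cotensorEq ⊗ C)`. -/
lemma lift_canK (hμ : IsAction μ) (hσ : IsCocanInverse μ σ)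
    {t : (C ⊗[k] C) ⊗[k] C} (ht : (cotensorEq μ).rTensor C t = 0) :
    ((cocanF μ ∘ₗ Kmap σ).rTensor C) t = t := by
  classical
  have hex : Function.Exact (((LinearMap.ker (cotensorEq μ)).subtype).rTensor C)
      ((cotensorEq μ).rTensor C) :=
    Module.Flat.rTensor_exact C (LinearMap.exact_subtype_ker_map (cotensorEq μ))
  obtain ⟨s, hs⟩ := (hex t).mp ht
  rw [← hs]
  clear hs ht
  induction s using TensorProduct.induction_on with
  | zero => simp
  | tmul x z =>
      simp only [rTensor_tmul, Submodule.coe_subtype, coe_comp, Function.comp_apply]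
      rw [can_Kmap_of_mem μ σ hμ hσ x.2]
  | add u v hu hv => simp only [map_add, hu, hv]

end GaloisCoext
end B2
section B3
namespace GaloisCoext

variable {k A C : Type*} [Field k] [Ring A] [Algebra k A]
  [AddCommGroup C] [Module k C] [Coalgebra k C]
variable (μ : C ⊗[k] A →ₗ[k] C) (σ : C ⊗[k] C →ₗ[k] C ⊗[k] A)

lemma cotensorEq_tmul (x y : C) (rx : Coalgebra.Repr k x (C × C)) (ry : Coalgebra.Repr k y (C × C)) :
    cotensorEq μ (x ⊗ₜ[k] y)
      = (∑ i ∈ rx.index, rx.left i ⊗ₜ[k] ((coidealI μ).mkQ (rx.right i) ⊗ₜ[k] y))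
        - ∑ j ∈ ry.index, x ⊗ₜ[k] ((coidealI μ).mkQ (ry.left j) ⊗ₜ[k] ry.right j) := by
  simp only [cotensorEq, coactL, coactR, LinearMap.sub_apply, coe_comp,
    LinearEquiv.coe_coe, Function.comp_apply, rTensor_tmul, lTensor_tmul]
  rw [← rx.eq, ← ry.eq]
  simp [sum_tmul, tmul_sum, map_sum]

/-- reassociation with `Δ` on the last leg: `c ⊗ (b ⊗ v) ↦ (c ⊗ (b ⊗ v₁)) ⊗ v₂`. -/
noncomputable def Wmap : C ⊗[k] ((C ⧸ coidealI μ) ⊗[k] C)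
    →ₗ[k] (C ⊗[k] ((C ⧸ coidealI μ) ⊗[k] C)) ⊗[k] C :=
  (TensorProduct.assoc k C ((C ⧸ coidealI μ) ⊗[k] C) C).symm.toLinearMap
    ∘ₗ ((TensorProduct.assoc k (C ⧸ coidealI μ) C C).symm.toLinearMap.lTensor C)
    ∘ₗ (((comul (R := k) (A := C)).lTensor (C ⧸ coidealI μ)).lTensor C)

set_option maxHeartbeats 1000000 in
lemma E3_pure (x y : C) :
    (cotensorEq μ).rTensor C (Tmap (x ⊗ₜ[k] y)) = Wmap μ (cotensorEq μ (x ⊗ₜ[k] y)) := by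
  classical
  set rx := Coalgebra.Repr.arbitrary k x
  set ry := Coalgebra.Repr.arbitrary k y
  set ryl : ∀ j, Coalgebra.Repr k (ry.left j) (C × C) := fun j => Coalgebra.Repr.arbitrary k _
  set ryr : ∀ j, Coalgebra.Repr k (ry.right j) (C × C) := fun j => Coalgebra.Repr.arbitrary k _
  rw [Tmap_tmul x y ry, map_sum, cotensorEq_tmul μ x y rx ry, map_sub, map_sum, map_sum]
  have hW : ∀ (u : C) (b : C ⧸ coidealI μ) (v : C) (rv : Coalgebra.Repr k v (C × C)),
      Wmap μ (u ⊗ₜ[k] (b ⊗ₜ[k] v))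
        = ∑ l ∈ rv.index, (u ⊗ₜ[k] (b ⊗ₜ[k] rv.left l)) ⊗ₜ[k] rv.right l := by
    intro u b v rv
    simp only [Wmap, coe_comp, LinearEquiv.coe_coe, Function.comp_apply, lTensor_tmul]
    rw [← rv.eq]
    simp [tmul_sum, map_sum]
  have hL : ∀ j ∈ ry.index,
      (cotensorEq μ).rTensor C ((x ⊗ₜ[k] ry.left j) ⊗ₜ[k] ry.right j)
        = (∑ i ∈ rx.index,
            (rx.left i ⊗ₜ[k] ((coidealI μ).mkQ (rx.right i) ⊗ₜ[k] ry.left j)) ⊗ₜ[k] ry.right j)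
          - ∑ l ∈ (ryl j).index,
            (x ⊗ₜ[k] ((coidealI μ).mkQ ((ryl j).left l) ⊗ₜ[k] (ryl j).right l)) ⊗ₜ[k] ry.right j := by
    intro j _
    rw [rTensor_tmul, cotensorEq_tmul μ x (ry.left j) rx (ryl j)]
    simp [sub_tmul, sum_tmul]
  rw [Finset.sum_congr rfl hL]
  rw [show (∑ j ∈ ry.index, ((∑ i ∈ rx.index, (rx.left i ⊗ₜ[k] ((coidealI μ).mkQ (rx.right i) ⊗ₜ[k] ry.left j)) ⊗ₜ[k] ry.right j) - ∑ l ∈ (ryl j).index, (x ⊗ₜ[k] ((coidealI μ).mkQ ((ryl j).left l) ⊗ₜ[k] (ryl j).right l)) ⊗ₜ[k] ry.right j)) = (∑ j ∈ ry.index, ∑ i ∈ rx.index, (rx.left i ⊗ₜ[k] ((coidealI μ).mkQ (rx.right i) ⊗ₜ[k] ry.left j)) ⊗ₜ[k] ry.right j) - ∑ j ∈ ry.index, ∑ l ∈ (ryl j).index, (x ⊗ₜ[k] ((coidealI μ).mkQ ((ryl j).left l) ⊗ₜ[k] (ryl j).right l)) ⊗ₜ[k] ry.right j by exact Finset.sum_sub_distrib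 (G := (C ⊗[k] ((C ⧸ coidealI μ) ⊗[k] C)) ⊗[k] C) _ _]
  have h1 : ∑ j ∈ ry.index, ∑ i ∈ rx.index,
      (rx.left i ⊗ₜ[k] ((coidealI μ).mkQ (rx.right i) ⊗ₜ[k] ry.left j)) ⊗ₜ[k] ry.right j
      = ∑ i ∈ rx.index, Wmap μ (rx.left i ⊗ₜ[k] ((coidealI μ).mkQ (rx.right i) ⊗ₜ[k] y)) := by
    rw [Finset.sum_comm]
    exact Finset.sum_congr rfl fun i _ => (hW _ _ _ ry).symm
  have h2 : ∑ j ∈ ry.index, ∑ l ∈ (ryl j).index,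
      (x ⊗ₜ[k] ((coidealI μ).mkQ ((ryl j).left l) ⊗ₜ[k] (ryl j).right l)) ⊗ₜ[k] ry.right j
      = ∑ j ∈ ry.index, Wmap μ (x ⊗ₜ[k] ((coidealI μ).mkQ (ry.left j) ⊗ₜ[k] ry.right j)) := by
    set M : C ⊗[k] (C ⊗[k] C) →ₗ[k] (C ⊗[k] ((C ⧸ coidealI μ) ⊗[k] C)) ⊗[k] C :=
      (((TensorProduct.mk k C ((C ⧸ coidealI μ) ⊗[k] C)) x).rTensor C)
        ∘ₗ (TensorProduct.assoc k (C ⧸ coidealI μ) C C).symm.toLinearMap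
        ∘ₗ ((coidealI μ).mkQ.rTensor (C ⊗[k] C)) with hM
    have hMv : ∀ u v w : C, M (u ⊗ₜ[k] (v ⊗ₜ[k] w))
        = (x ⊗ₜ[k] ((coidealI μ).mkQ u ⊗ₜ[k] v)) ⊗ₜ[k] w := by
      intro u v w; simp [hM]
    calc
      ∑ j ∈ ry.index, ∑ l ∈ (ryl j).index,
          (x ⊗ₜ[k] ((coidealI μ).mkQ ((ryl j).left l) ⊗ₜ[k] (ryl j).right l)) ⊗ₜ[k] ry.right j
        = ∑ j ∈ ry.index, ∑ l ∈ (ryl j).index,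
            M ((ryl j).left l ⊗ₜ[k] ((ryl j).right l ⊗ₜ[k] ry.right j)) := by simp [hMv]
      _ = ∑ j ∈ ry.index, ∑ l ∈ (ryr j).index,
            M (ry.left j ⊗ₜ[k] ((ryr j).left l ⊗ₜ[k] (ryr j).right l)) := by
          exact repr_coassoc (W := (C ⊗[k] ((C ⧸ coidealI μ) ⊗[k] C)) ⊗[k] C) M ry ryl ryr
      _ = ∑ j ∈ ry.index, Wmap μ (x ⊗ₜ[k] ((coidealI μ).mkQ (ry.left j) ⊗ₜ[k] ry.right j)) := by
          refine Finset.sum_congr rfl fun j _ => ?_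
          rw [hW _ _ _ (ryr j)]
          simp [hMv]
  rw [h1, h2]

lemma Tmap_can_mem (hσ : IsCocanInverse μ σ) (c : C) (a : A) :
    (cotensorEq μ).rTensor C (Tmap (cocanF μ (c ⊗ₜ[k] a))) = 0 := by
  classical
  set r := Coalgebra.Repr.arbitrary k c
  have hcan : cotensorEq μ (cocanF μ (c ⊗ₜ[k] a)) = 0 := by
    have : cocanF μ (c ⊗ₜ[k] a) ∈ cotensor μ := hσ.1 ⟨c ⊗ₜ[k] a, rfl⟩
    simpa [cotensor, LinearMap.mem_ker] using this
  rw [can_tmul μ c a r, map_sum, map_sum]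
  calc
    ∑ i ∈ r.index, (cotensorEq μ).rTensor C (Tmap (r.left i ⊗ₜ[k] μ (r.right i ⊗ₜ[k] a)))
      = ∑ i ∈ r.index, Wmap μ (cotensorEq μ (r.left i ⊗ₜ[k] μ (r.right i ⊗ₜ[k] a))) :=
        Finset.sum_congr rfl fun i _ => E3_pure μ _ _
    _ = Wmap μ (cotensorEq μ (cocanF μ (c ⊗ₜ[k] a))) := by
        rw [can_tmul μ c a r]; simp [map_sum]
    _ = 0 := by rw [hcan, map_zero]

lemma star (hμ : IsAction μ) (hσ : IsCocanInverse μ σ) (c : C) (a : A) :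
    ((cocanF μ ∘ₗ Kmap σ).rTensor C) (Tmap (cocanF μ (c ⊗ₜ[k] a)))
      = Tmap (cocanF μ (c ⊗ₜ[k] a)) :=
  lift_canK μ σ hμ hσ (Tmap_can_mem μ σ hσ c a)

end GaloisCoext
end B3
section B4
namespace GaloisCoext

variable {k A C : Type*} [Field k] [Ring A] [Algebra k A]
  [AddCommGroup C] [Module k C] [Coalgebra k C]
variable (μ : C ⊗[k] A →ₗ[k] C) (σ : C ⊗[k] C →ₗ[k] C ⊗[k] A)

set_option maxHeartbeats 1000000 in
lemma inner9 (c : C) (a : A) :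
    (TensorProduct.assoc k C A C).symm ((cocanPsi μ σ).lTensor C
        ((TensorProduct.assoc k C C A) ((comul (R := k)).rTensor A (c ⊗ₜ[k] a))))
      = (Kmap σ).rTensor C (Tmap (cocanF μ (c ⊗ₜ[k] a))) := by
  classical
  set r := Coalgebra.Repr.arbitrary k c
  set rli : ∀ i, Coalgebra.Repr k (r.left i) (C × C) := fun i => Coalgebra.Repr.arbitrary k _
  set rr : ∀ i, Coalgebra.Repr k (r.right i) (C × C) := fun i => Coalgebra.Repr.arbitrary k _
  set rm : ∀ i, Coalgebra.Repr k (μ (r.right i ⊗ₜ[k] a)) (C × C) :=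
    fun i => Coalgebra.Repr.arbitrary k _
  set rm' : ∀ i j, Coalgebra.Repr k (μ ((rr i).right j ⊗ₜ[k] a)) (C × C) :=
    fun i j => Coalgebra.Repr.arbitrary k _
  set M : C ⊗[k] (C ⊗[k] C) →ₗ[k] (C ⊗[k] A) ⊗[k] C :=
    (TensorProduct.assoc k C A C).symm.toLinearMap
      ∘ₗ (((cotrans σ).rTensor C).lTensor C)
      ∘ₗ ((TensorProduct.assoc k C C C).symm.toLinearMap.lTensor C)
      ∘ₗ ((comul (R := k) ∘ₗ actBy μ a).lTensor C).lTensor C with hM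
  have hMv : ∀ (x y z : C) (rz : Coalgebra.Repr k (μ (z ⊗ₜ[k] a)) (C × C)),
      M (x ⊗ₜ[k] (y ⊗ₜ[k] z)) = ∑ w ∈ rz.index,
        (x ⊗ₜ[k] cotrans σ (y ⊗ₜ[k] rz.left w)) ⊗ₜ[k] rz.right w := by
    intro x y z rz
    simp only [hM, coe_comp, LinearEquiv.coe_coe, Function.comp_apply, lTensor_tmul, actBy,
      TensorProduct.mk_apply, LinearMap.flip_apply]
    rw [← rz.eq]
    simp [tmul_sum, map_sum]
  have lhs_eq : (TensorProduct.assoc k C A C).symm ((cocanPsi μ σ).lTensor C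
        ((TensorProduct.assoc k C C A) ((comul (R := k)).rTensor A (c ⊗ₜ[k] a))))
      = ∑ i ∈ r.index, ∑ j ∈ (rr i).index,
          M (r.left i ⊗ₜ[k] ((rr i).left j ⊗ₜ[k] (rr i).right j)) := by
    rw [rTensor_tmul, ← r.eq]
    simp only [sum_tmul, map_sum, LinearEquiv.coe_coe, assoc_tmul, lTensor_tmul]
    refine Finset.sum_congr rfl fun i _ => ?_
    rw [psi_tmul μ σ _ a (rr i) (rm' i)]
    rw [Finset.sum_congr rfl (fun j _ => hMv (r.left i) ((rr i).left j) ((rr i).right j) (rm' i j))]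
    simp [tmul_sum, map_sum]
  have rhs_eq : (Kmap σ).rTensor C (Tmap (cocanF μ (c ⊗ₜ[k] a)))
      = ∑ i ∈ r.index, ∑ j ∈ (rli i).index,
          M ((rli i).left j ⊗ₜ[k] ((rli i).right j ⊗ₜ[k] r.right i)) := by
    rw [can_tmul μ c a r, map_sum, map_sum]
    refine Finset.sum_congr rfl fun i _ => ?_
    rw [Tmap_tmul _ _ (rm i), map_sum]
    rw [Finset.sum_congr rfl (fun j (_ : j ∈ (rm i).index) => by
      rw [rTensor_tmul, Kmap_tmul σ _ _ (rli i)] :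
      ∀ j ∈ (rm i).index, (Kmap σ).rTensor C ((r.left i ⊗ₜ[k] (rm i).left j) ⊗ₜ[k] (rm i).right j)
        = (∑ l ∈ (rli i).index,
            (rli i).left l ⊗ₜ[k] cotrans σ ((rli i).right l ⊗ₜ[k] (rm i).left j)) ⊗ₜ[k] (rm i).right j)]
    rw [Finset.sum_congr rfl (fun j _ => sum_tmul _ _ _), Finset.sum_comm]
    refine Finset.sum_congr rfl fun l _ => ?_
    rw [hMv _ _ _ (rm i)]
  rw [lhs_eq, rhs_eq]
  exact (repr_coassoc (W := (C ⊗[k] A) ⊗[k] C) M r rli rr).symm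

lemma charE (hμ : IsAction μ) (hσ : IsCocanInverse μ σ) (c : C) (a : A) :
    (cocanF μ).rTensor C ((TensorProduct.assoc k C A C).symm ((cocanPsi μ σ).lTensor C
        ((TensorProduct.assoc k C C A) ((comul (R := k)).rTensor A (c ⊗ₜ[k] a)))))
      = Tmap (cocanF μ (c ⊗ₜ[k] a)) := by
  rw [inner9 μ σ c a]
  have : (cocanF μ).rTensor C ((Kmap σ).rTensor C (Tmap (cocanF μ (c ⊗ₜ[k] a))))
      = ((cocanF μ ∘ₗ Kmap σ).rTensor C) (Tmap (cocanF μ (c ⊗ₜ[k] a))) := by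
    rw [rTensor_comp]; rfl
  rw [this, star μ σ hμ hσ c a]

lemma fin3 (x y : C) :
    (comul (R := k)).lTensor A ((cotrans σ).rTensor C (Tmap (x ⊗ₜ[k] y)))
      = (TensorProduct.assoc k A C C)
          ((((cotrans σ).rTensor C ∘ₗ Tmap).rTensor C) (Tmap (x ⊗ₜ[k] y))) := by
  classical
  set ry := Coalgebra.Repr.arbitrary k y
  set ryl : ∀ j, Coalgebra.Repr k (ry.left j) (C × C) := fun j => Coalgebra.Repr.arbitrary k _
  set ryr : ∀ j, Coalgebra.Repr k (ry.right j) (C × C) := fun j => Coalgebra.Repr.arbitrary k _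
  set M : C ⊗[k] (C ⊗[k] C) →ₗ[k] A ⊗[k] (C ⊗[k] C) :=
    ((cotrans σ) ∘ₗ ((TensorProduct.mk k C C) x)).rTensor (C ⊗[k] C) with hM
  have hMv : ∀ u v w : C, M (u ⊗ₜ[k] (v ⊗ₜ[k] w))
      = cotrans σ (x ⊗ₜ[k] u) ⊗ₜ[k] (v ⊗ₜ[k] w) := by intro u v w; simp [hM]
  have lhs_eq : (comul (R := k)).lTensor A ((cotrans σ).rTensor C (Tmap (x ⊗ₜ[k] y)))
      = ∑ j ∈ ry.index, ∑ l ∈ (ryr j).index,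
          M (ry.left j ⊗ₜ[k] ((ryr j).left l ⊗ₜ[k] (ryr j).right l)) := by
    rw [Tmap_tmul x y ry]
    simp only [map_sum, rTensor_tmul, lTensor_tmul]
    refine Finset.sum_congr rfl fun j _ => ?_
    rw [← (ryr j).eq]
    simp [tmul_sum, hMv]
  have rhs_eq : (TensorProduct.assoc k A C C)
        ((((cotrans σ).rTensor C ∘ₗ Tmap).rTensor C) (Tmap (x ⊗ₜ[k] y)))
      = ∑ j ∈ ry.index, ∑ l ∈ (ryl j).index,
          M ((ryl j).left l ⊗ₜ[k] ((ryl j).right l ⊗ₜ[k] ry.right j)) := by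
    rw [Tmap_tmul x y ry]
    simp only [map_sum, rTensor_tmul, coe_comp, Function.comp_apply]
    refine Finset.sum_congr rfl fun j _ => ?_
    rw [Tmap_tmul _ _ (ryl j)]
    simp [map_sum, sum_tmul, hMv]
  rw [lhs_eq, rhs_eq]
  exact (repr_coassoc (W := A ⊗[k] (C ⊗[k] C)) M ry ryl ryr).symm

lemma can_one (hμ : IsAction μ) (z : C) :
    cocanF μ (z ⊗ₜ[k] (1 : A)) = comul (R := k) z := by
  classical
  set r := Coalgebra.Repr.arbitrary k z
  rw [can_tmul μ z 1 r]
  rw [Finset.sum_congr rfl (fun i _ => by rw [hμ.1])]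
  exact r.eq

lemma axiom2 (hμ : IsAction μ) (hσ : IsCocanInverse μ σ) (c : C) :
    cocanPsi μ σ (c ⊗ₜ[k] (1 : A)) = (1 : A) ⊗ₜ[k] c := by
  classical
  set r := Coalgebra.Repr.arbitrary k c
  set rl : ∀ i, Coalgebra.Repr k (r.left i) (C × C) := fun i => Coalgebra.Repr.arbitrary k _
  set rr : ∀ i, Coalgebra.Repr k (r.right i) (C × C) := fun i => Coalgebra.Repr.arbitrary k _
  set M : C ⊗[k] (C ⊗[k] C) →ₗ[k] A ⊗[k] C :=
    ((cotrans σ).rTensor C) ∘ₗ (TensorProduct.assoc k C C C).symm.toLinearMap with hM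
  have hMv : ∀ u v w : C, M (u ⊗ₜ[k] (v ⊗ₜ[k] w))
      = cotrans σ (u ⊗ₜ[k] v) ⊗ₜ[k] w := by intro u v w; simp [hM]
  have tau_comul : ∀ z : C, cotrans σ (comul (R := k) z) = counit (R := k) z • (1 : A) := by
    intro z
    rw [← can_one μ hμ z, tau_can μ σ hσ]
  rw [psi_eq]
  simp only [coe_comp, Function.comp_apply]
  rw [can_one μ hμ c, ← r.eq]
  simp only [map_sum]
  calc
    ∑ i ∈ r.index, (cotrans σ).rTensor C (Tmap (r.left i ⊗ₜ[k] r.right i))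
      = ∑ i ∈ r.index, ∑ j ∈ (rr i).index,
          M (r.left i ⊗ₜ[k] ((rr i).left j ⊗ₜ[k] (rr i).right j)) := by
        refine Finset.sum_congr rfl fun i _ => ?_
        rw [Tmap_tmul _ _ (rr i)]
        simp [map_sum, hMv]
    _ = ∑ i ∈ r.index, ∑ j ∈ (rl i).index,
          M ((rl i).left j ⊗ₜ[k] ((rl i).right j ⊗ₜ[k] r.right i)) :=
        (repr_coassoc (W := A ⊗[k] C) M r rl rr).symm
    _ = ∑ i ∈ r.index, counit (R := k) (r.left i) • ((TensorProduct.mk k A C) 1 (r.right i)) := by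
        refine Finset.sum_congr rfl fun i _ => ?_
        have : ∑ j ∈ (rl i).index, M ((rl i).left j ⊗ₜ[k] ((rl i).right j ⊗ₜ[k] r.right i))
            = cotrans σ (comul (R := k) (r.left i)) ⊗ₜ[k] r.right i := by
          rw [← (rl i).eq]
          simp [sum_tmul, map_sum, hMv]
        rw [this, tau_comul]
        simp [TensorProduct.smul_tmul']
    _ = (TensorProduct.mk k A C) 1 c := repr_counit_left _ r
    _ = (1 : A) ⊗ₜ[k] c := rfl

lemma axiom4 (hμ : IsAction μ) (hσ : IsCocanInverse μ σ) (c : C) (a : A) :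
    (TensorProduct.rid k A) ((counit (R := k) (A := C)).lTensor A (cocanPsi μ σ (c ⊗ₜ[k] a)))
      = (TensorProduct.lid k A) ((counit (R := k) (A := C)).rTensor A (c ⊗ₜ[k] a)) := by
  classical
  set r := Coalgebra.Repr.arbitrary k c
  set rm : ∀ i, Coalgebra.Repr k (μ (r.right i ⊗ₜ[k] a)) (C × C) :=
    fun i => Coalgebra.Repr.arbitrary k _
  rw [psi_tmul μ σ c a r rm]
  simp only [map_sum, lTensor_tmul, rid_tmul]
  have : ∀ i ∈ r.index, ∑ j ∈ (rm i).index,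
      counit (R := k) ((rm i).right j) • cotrans σ (r.left i ⊗ₜ[k] (rm i).left j)
      = cotrans σ (r.left i ⊗ₜ[k] μ (r.right i ⊗ₜ[k] a)) := by
    intro i _
    exact repr_counit_right (cotrans σ ∘ₗ (TensorProduct.mk k C C) (r.left i)) (rm i)
  rw [Finset.sum_congr rfl this]
  rw [← map_sum, ← can_tmul μ c a r, tau_can μ σ hσ]
  simp

lemma fin3Map :
    (comul (R := k)).lTensor A ∘ₗ (cotrans σ).rTensor C ∘ₗ Tmap
      = (TensorProduct.assoc k A C C).toLinearMap
          ∘ₗ (((cotrans σ).rTensor C ∘ₗ Tmap).rTensor C) ∘ₗ Tmap := by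
  apply TensorProduct.ext'
  intro x y
  simpa using fin3 σ x y

lemma axiom3 (hμ : IsAction μ) (hσ : IsCocanInverse μ σ) (c : C) (a : A) :
    (comul (R := k)).lTensor A (cocanPsi μ σ (c ⊗ₜ[k] a))
      = (TensorProduct.assoc k A C C) ((cocanPsi μ σ).rTensor C
          ((TensorProduct.assoc k C A C).symm ((cocanPsi μ σ).lTensor C
            ((TensorProduct.assoc k C C A) ((comul (R := k)).rTensor A (c ⊗ₜ[k] a)))))) := by
  rw [inner9 μ σ c a]
  set t := Tmap (cocanF μ (c ⊗ₜ[k] a)) with ht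
  have e1 : cocanPsi μ σ ∘ₗ Kmap σ
      = ((cotrans σ).rTensor C ∘ₗ Tmap) ∘ₗ (cocanF μ ∘ₗ Kmap σ) := by
    rw [psi_eq]; rfl
  have h1 : (cocanPsi μ σ).rTensor C ((Kmap σ).rTensor C t)
      = (((cotrans σ).rTensor C ∘ₗ Tmap).rTensor C) t := by
    calc (cocanPsi μ σ).rTensor C ((Kmap σ).rTensor C t)
        = ((cocanPsi μ σ ∘ₗ Kmap σ).rTensor C) t := by rw [rTensor_comp]; rfl
      _ = (((cotrans σ).rTensor C ∘ₗ Tmap).rTensor C) (((cocanF μ ∘ₗ Kmap σ).rTensor C) t) := by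
          rw [e1, rTensor_comp]; rfl
      _ = (((cotrans σ).rTensor C ∘ₗ Tmap).rTensor C) t := by rw [ht, star μ σ hμ hσ c a]
  rw [h1]
  have := congrFun (congrArg DFunLike.coe (fin3Map (k := k) (A := A) (C := C) σ))
    (cocanF μ (c ⊗ₜ[k] a))
  simp only [coe_comp, LinearEquiv.coe_coe, Function.comp_apply] at this
  rw [psi_eq]
  simp only [coe_comp, Function.comp_apply]
  exact this

end GaloisCoext
end B4
section B5
namespace GaloisCoext

variable {k A C : Type*} [Field k] [Ring A] [Algebra k A]
  [AddCommGroup C] [Module k C] [Coalgebra k C]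
variable (μ : C ⊗[k] A →ₗ[k] C) (σ : C ⊗[k] C →ₗ[k] C ⊗[k] A)

/-- `E`-transform: `c ⊗ y ↦ ∑ can(c₁ ⊗ L(c₂ ⊗ y)_A) ⊗ L(c₂ ⊗ y)_W`. -/
noncomputable def Emap {Y W : Type*} [AddCommGroup Y] [Module k Y]
    [AddCommGroup W] [Module k W] (L : C ⊗[k] Y →ₗ[k] A ⊗[k] W) :
    C ⊗[k] Y →ₗ[k] (C ⊗[k] C) ⊗[k] W :=
  (cocanF μ).rTensor W ∘ₗ (TensorProduct.assoc k C A W).symm.toLinearMap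
    ∘ₗ L.lTensor C ∘ₗ (TensorProduct.assoc k C C Y).toLinearMap
    ∘ₗ (comul (R := k)).rTensor Y

lemma Emap_tmul {Y W : Type*} [AddCommGroup Y] [Module k Y]
    [AddCommGroup W] [Module k W] (L : C ⊗[k] Y →ₗ[k] A ⊗[k] W)
    (c : C) (y : Y) (r : Coalgebra.Repr k c (C × C)) :
    Emap μ L (c ⊗ₜ[k] y) = ∑ i ∈ r.index,
      (cocanF μ).rTensor W ((TensorProduct.assoc k C A W).symm
        (r.left i ⊗ₜ[k] L (r.right i ⊗ₜ[k] y))) := by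
  simp only [Emap, coe_comp, LinearEquiv.coe_coe, Function.comp_apply, rTensor_tmul]
  rw [← r.eq]
  simp [sum_tmul, map_sum]

lemma tau_can_paste (hσ : IsCocanInverse μ σ) {W : Type*} [AddCommGroup W] [Module k W]
    (y : C) (S : A ⊗[k] W) :
    (cotrans σ).rTensor W ((cocanF μ).rTensor W
        ((TensorProduct.assoc k C A W).symm (y ⊗ₜ[k] S)))
      = counit (R := k) y • S := by
  induction S using TensorProduct.induction_on with
  | zero => simp
  | tmul t w =>
      simp only [assoc_symm_tmul, rTensor_tmul, tau_can μ σ hσ]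
      rw [TensorProduct.smul_tmul']
  | add u v hu hv => simp only [tmul_add, map_add, hu, hv, smul_add]

lemma Emap_rec (hσ : IsCocanInverse μ σ) {Y W : Type*} [AddCommGroup Y] [Module k Y]
    [AddCommGroup W] [Module k W] (L : C ⊗[k] Y →ₗ[k] A ⊗[k] W) :
    (cotrans σ).rTensor W ∘ₗ Emap μ L = L := by
  apply TensorProduct.ext'
  intro c y
  classical
  set r := Coalgebra.Repr.arbitrary k c
  simp only [coe_comp, Function.comp_apply]
  rw [Emap_tmul μ L c y r, map_sum]
  rw [Finset.sum_congr rfl (fun i _ => tau_can_paste μ σ hσ (r.left i) (L (r.right i ⊗ₜ[k] y)))]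
  have : ∀ i, L (r.right i ⊗ₜ[k] y) = (L ∘ₗ (TensorProduct.mk k C Y).flip y) (r.right i) := by
    intro i; simp
  simp only [this]
  exact repr_counit_left (L ∘ₗ (TensorProduct.mk k C Y).flip y) r

lemma Emap_psi (hμ : IsAction μ) (hσ : IsCocanInverse μ σ) :
    Emap μ (cocanPsi μ σ) = Tmap ∘ₗ cocanF μ := by
  apply TensorProduct.ext'
  intro c a
  have := charE μ σ hμ hσ c a
  simpa [Emap] using this

lemma charE' (hμ : IsAction μ) (hσ : IsCocanInverse μ σ) (m : C) (b : A)
    (r : Coalgebra.Repr k m (C × C)) :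
    ∑ j ∈ r.index, (cocanF μ).rTensor C ((TensorProduct.assoc k C A C).symm
        (r.left j ⊗ₜ[k] cocanPsi μ σ (r.right j ⊗ₜ[k] b)))
      = Tmap (cocanF μ (m ⊗ₜ[k] b)) := by
  rw [← Emap_tmul μ (cocanPsi μ σ) m b r, Emap_psi μ σ hμ hσ]
  rfl

/-- `(ε ⊗ C) ∘ can = μ`. -/
lemma eps_can (y : C) (t : A) :
    ((TensorProduct.lid k C).toLinearMap ∘ₗ (counit (R := k)).rTensor C)
        (cocanF μ (y ⊗ₜ[k] t)) = μ (y ⊗ₜ[k] t) := by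
  classical
  set r := Coalgebra.Repr.arbitrary k y
  rw [can_tmul μ y t r]
  simp only [map_sum, coe_comp, LinearEquiv.coe_coe, Function.comp_apply, rTensor_tmul, lid_tmul]
  have : ∀ i, μ (r.right i ⊗ₜ[k] t) = (μ ∘ₗ (TensorProduct.mk k C A).flip t) (r.right i) := by
    intro i; simp
  simp only [this]
  simpa using repr_counit_left (μ ∘ₗ (TensorProduct.mk k C A).flip t) r

lemma rho_can (y : C) (S : A ⊗[k] C) :
    (((TensorProduct.lid k C).toLinearMap ∘ₗ (counit (R := k)).rTensor C).rTensor C)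
        ((cocanF μ).rTensor C ((TensorProduct.assoc k C A C).symm (y ⊗ₜ[k] S)))
      = μ.rTensor C ((TensorProduct.assoc k C A C).symm (y ⊗ₜ[k] S)) := by
  induction S using TensorProduct.induction_on with
  | zero => simp
  | tmul t w => simp only [assoc_symm_tmul, rTensor_tmul, eps_can μ y t]
  | add u v hu hv => simp only [tmul_add, map_add, hu, hv]

lemma Tmap_mk (x y : C) :
    Tmap (x ⊗ₜ[k] y) = ((TensorProduct.mk k C C x).rTensor C) (comul (R := k) y) := by
  classical
  set r := Coalgebra.Repr.arbitrary k y
  rw [Tmap_tmul x y r, ← r.eq]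
  simp [map_sum]

variable (b : A)

/-- `ψ(− ⊗ b) : C → A ⊗ C`. -/
noncomputable def psib : C →ₗ[k] A ⊗[k] C :=
  cocanPsi μ σ ∘ₗ (TensorProduct.mk k C A).flip b

/-- `(y ⊗ v) ⊗ (t ⊗ n) ↦ (y ⊗ μ(v ⊗ t)) ⊗ n`. -/
noncomputable def Xmap : (C ⊗[k] C) ⊗[k] (A ⊗[k] C) →ₗ[k] (C ⊗[k] C) ⊗[k] C :=
  ((μ.lTensor C).rTensor C) ∘ₗ ((TensorProduct.assoc k C C A).toLinearMap.rTensor C)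
    ∘ₗ (TensorProduct.assoc k (C ⊗[k] C) A C).symm.toLinearMap

lemma Xmap_tmul (y v : C) (S : A ⊗[k] C) :
    Xmap μ ((y ⊗ₜ[k] v) ⊗ₜ[k] S)
      = ((TensorProduct.mk k C C y).rTensor C) (μ.rTensor C
          ((TensorProduct.assoc k C A C).symm (v ⊗ₜ[k] S))) := by
  induction S using TensorProduct.induction_on with
  | zero => simp
  | tmul t w => simp [Xmap]
  | add u v' hu hv => simp only [tmul_add, map_add, hu, hv]

noncomputable def Gmap : (C ⊗[k] C) ⊗[k] C →ₗ[k] (C ⊗[k] C) ⊗[k] C :=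
  Xmap μ ∘ₗ (psib μ σ b).lTensor (C ⊗[k] C)

/-- cancellation: `∑ μ(m₁ ⊗ ψ(m₂ ⊗ b)_A) ⊗ ψ(m₂ ⊗ b)_C = Δ(μ(m ⊗ b))`. -/
lemma cancel_map (hμ : IsAction μ) (hσ : IsCocanInverse μ σ) (m : C) :
    μ.rTensor C ((TensorProduct.assoc k C A C).symm.toLinearMap
        ((psib μ σ b).lTensor C (comul (R := k) m)))
      = comul (R := k) (μ (m ⊗ₜ[k] b)) := by
  classical
  set r := Coalgebra.Repr.arbitrary k m
  set rq : ∀ i, Coalgebra.Repr k (μ (r.right i ⊗ₜ[k] b)) (C × C) :=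
    fun i => Coalgebra.Repr.arbitrary k _
  have h := congrArg ((((TensorProduct.lid k C).toLinearMap
      ∘ₗ (counit (R := k)).rTensor C).rTensor C)) (charE' μ σ hμ hσ m b r)
  rw [map_sum] at h
  rw [Finset.sum_congr rfl (fun j _ => rho_can μ (r.left j) _)] at h
  -- rewrite RHS of h
  have hR : (((TensorProduct.lid k C).toLinearMap
        ∘ₗ (counit (R := k)).rTensor C).rTensor C) (Tmap (cocanF μ (m ⊗ₜ[k] b)))
      = comul (R := k) (μ (m ⊗ₜ[k] b)) := by
    rw [can_tmul μ m b r, map_sum, map_sum]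
    have e : ∀ i ∈ r.index, (((TensorProduct.lid k C).toLinearMap
          ∘ₗ (counit (R := k)).rTensor C).rTensor C)
            (Tmap (r.left i ⊗ₜ[k] μ (r.right i ⊗ₜ[k] b)))
        = counit (R := k) (r.left i) •
            ((comul (R := k) ∘ₗ μ ∘ₗ (TensorProduct.mk k C A).flip b) (r.right i)) := by
      intro i _
      rw [Tmap_tmul _ _ (rq i)]
      simp only [map_sum, rTensor_tmul, coe_comp, LinearEquiv.coe_coe, Function.comp_apply,
        lid_tmul, TensorProduct.mk_apply, flip_apply]
      rw [← (rq i).eq]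
      simp [TensorProduct.smul_tmul', Finset.smul_sum]
    rw [Finset.sum_congr rfl e]
    have := repr_counit_left (comul (R := k) ∘ₗ μ ∘ₗ (TensorProduct.mk k C A).flip b) r
    simpa using this
  rw [hR] at h
  rw [← h]
  -- LHS matches
  rw [← r.eq]
  simp only [map_sum, lTensor_tmul, LinearEquiv.coe_toLinearMap]
  refine Finset.sum_congr rfl fun j _ => ?_
  simp [psib]

end GaloisCoext
end B5
section B6
namespace GaloisCoext

variable {k A C : Type*} [Field k] [Ring A] [Algebra k A]
  [AddCommGroup C] [Module k C] [Coalgebra k C]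
variable (μ : C ⊗[k] A →ₗ[k] C) (σ : C ⊗[k] C →ₗ[k] C ⊗[k] A) (b : A)

/-- `S ↦ (m ⊗ C)(A ⊗ ψ)(S ⊗ b)`. -/
noncomputable def Inner : A ⊗[k] C →ₗ[k] A ⊗[k] C :=
  (LinearMap.mul' k A).rTensor C ∘ₗ (TensorProduct.assoc k A A C).symm.toLinearMap
    ∘ₗ (cocanPsi μ σ).lTensor A ∘ₗ (TensorProduct.assoc k A C A).toLinearMap
    ∘ₗ (TensorProduct.mk k (A ⊗[k] C) A).flip b

lemma Inner_tmul (t : A) (n : C) :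
    Inner μ σ b (t ⊗ₜ[k] n)
      = (LinearMap.mul' k A).rTensor C ((TensorProduct.assoc k A A C).symm
          (t ⊗ₜ[k] cocanPsi μ σ (n ⊗ₜ[k] b))) := by
  simp [Inner]

lemma psib_apply (n : C) : psib μ σ b n = cocanPsi μ σ (n ⊗ₜ[k] b) := by simp [psib]

lemma restr (hμ : IsAction μ) (y : C) (S : A ⊗[k] C) :
    (cocanF μ).rTensor C ((TensorProduct.assoc k C A C).symm (y ⊗ₜ[k] Inner μ σ b S))
      = Gmap μ σ b ((cocanF μ).rTensor C
          ((TensorProduct.assoc k C A C).symm (y ⊗ₜ[k] S))) := by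
  classical
  set ry := Coalgebra.Repr.arbitrary k y
  induction S using TensorProduct.induction_on with
  | zero => simp
  | add u v hu hv => simp only [tmul_add, map_add, hu, hv]
  | tmul t n =>
      rw [Inner_tmul]
      have hG : Gmap μ σ b ((cocanF μ).rTensor C
            ((TensorProduct.assoc k C A C).symm (y ⊗ₜ[k] (t ⊗ₜ[k] n))))
          = Xmap μ (cocanF μ (y ⊗ₜ[k] t) ⊗ₜ[k] cocanPsi μ σ (n ⊗ₜ[k] b)) := by
        simp only [assoc_symm_tmul, rTensor_tmul, Gmap, coe_comp, Function.comp_apply,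
          lTensor_tmul, psib_apply]
      rw [hG]
      generalize cocanPsi μ σ (n ⊗ₜ[k] b) = S'
      induction S' using TensorProduct.induction_on with
      | zero => simp
      | add u v hu hv => simp only [tmul_add, map_add, hu, hv]
      | tmul s w =>
          simp only [assoc_symm_tmul, rTensor_tmul, mul'_apply]
          rw [can_tmul μ y t ry, can_tmul μ y (t * s) ry]
          simp only [sum_tmul, map_sum]
          refine Finset.sum_congr rfl fun i _ => ?_
          simp only [Xmap, coe_comp, LinearEquiv.coe_coe, Function.comp_apply,
            assoc_symm_tmul, rTensor_tmul, assoc_tmul, lTensor_tmul, mul'_apply]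
          rw [hμ.2]

lemma gmap_mk (x : C) (V : C ⊗[k] C) :
    Gmap μ σ b ((TensorProduct.mk k C C x).rTensor C V)
      = (TensorProduct.mk k C C x).rTensor C (μ.rTensor C
          ((TensorProduct.assoc k C A C).symm.toLinearMap ((psib μ σ b).lTensor C V))) := by
  induction V using TensorProduct.induction_on with
  | zero => simp
  | add u v hu hv => simp only [map_add, hu, hv]
  | tmul v w =>
      simp only [rTensor_tmul, TensorProduct.mk_apply, lTensor_tmul, LinearEquiv.coe_toLinearMap]
      rw [Gmap, coe_comp, Function.comp_apply, lTensor_tmul, Xmap_tmul]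

lemma g5_tmap_can (hμ : IsAction μ) (hσ : IsCocanInverse μ σ) (c : C) (a : A) :
    Gmap μ σ b (Tmap (cocanF μ (c ⊗ₜ[k] a))) = Tmap (cocanF μ (c ⊗ₜ[k] (a * b))) := by
  classical
  set r := Coalgebra.Repr.arbitrary k c
  rw [can_tmul μ c a r, can_tmul μ c (a * b) r, map_sum, map_sum, map_sum]
  refine Finset.sum_congr rfl fun i _ => ?_
  rw [Tmap_mk, Tmap_mk, gmap_mk, cancel_map μ σ b hμ hσ, hμ.2]

/-- left side of entwining axiom 1, curried in `b`. -/
noncomputable def Lb : C ⊗[k] A →ₗ[k] A ⊗[k] C :=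
  cocanPsi μ σ ∘ₗ (LinearMap.mulRight k b).lTensor C

lemma Emap_Lb (hμ : IsAction μ) (hσ : IsCocanInverse μ σ) (c : C) (a : A) :
    Emap μ (Lb μ σ b) (c ⊗ₜ[k] a) = Tmap (cocanF μ (c ⊗ₜ[k] (a * b))) := by
  classical
  set r := Coalgebra.Repr.arbitrary k c
  rw [Emap_tmul μ _ c a r]
  have e : ∀ i, Lb μ σ b (r.right i ⊗ₜ[k] a) = cocanPsi μ σ (r.right i ⊗ₜ[k] (a * b)) := by
    intro i; simp [Lb]
  simp only [e]
  exact charE' μ σ hμ hσ c (a * b) r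

lemma Emap_Rb (hμ : IsAction μ) (hσ : IsCocanInverse μ σ) (c : C) (a : A) :
    Emap μ (Inner μ σ b ∘ₗ cocanPsi μ σ) (c ⊗ₜ[k] a)
      = Tmap (cocanF μ (c ⊗ₜ[k] (a * b))) := by
  classical
  set r := Coalgebra.Repr.arbitrary k c
  rw [Emap_tmul μ _ c a r]
  have e : ∀ i ∈ r.index, (cocanF μ).rTensor C ((TensorProduct.assoc k C A C).symm
        (r.left i ⊗ₜ[k] (Inner μ σ b ∘ₗ cocanPsi μ σ) (r.right i ⊗ₜ[k] a)))
      = Gmap μ σ b ((cocanF μ).rTensor C ((TensorProduct.assoc k C A C).symm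
          (r.left i ⊗ₜ[k] cocanPsi μ σ (r.right i ⊗ₜ[k] a)))) := by
    intro i _
    rw [coe_comp, Function.comp_apply]
    exact restr μ σ b hμ _ _
  rw [Finset.sum_congr rfl e, ← map_sum, charE' μ σ hμ hσ c a r,
    g5_tmap_can μ σ b hμ hσ c a]

lemma Lb_eq_Rb (hμ : IsAction μ) (hσ : IsCocanInverse μ σ) :
    Lb μ σ b = Inner μ σ b ∘ₗ cocanPsi μ σ := by
  have hE : Emap μ (Lb μ σ b) = Emap μ (Inner μ σ b ∘ₗ cocanPsi μ σ) := by
    apply TensorProduct.ext'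
    intro c a
    rw [Emap_Lb μ σ b hμ hσ c a, Emap_Rb μ σ b hμ hσ c a]
  calc Lb μ σ b = (cotrans σ).rTensor C ∘ₗ Emap μ (Lb μ σ b) := (Emap_rec μ σ hσ _).symm
    _ = (cotrans σ).rTensor C ∘ₗ Emap μ (Inner μ σ b ∘ₗ cocanPsi μ σ) := by rw [hE]
    _ = Inner μ σ b ∘ₗ cocanPsi μ σ := Emap_rec μ σ hσ _

lemma axiom1 (hμ : IsAction μ) (hσ : IsCocanInverse μ σ) :
    cocanPsi μ σ ∘ₗ (LinearMap.mul' k A).lTensor C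
        ∘ₗ (TensorProduct.assoc k C A A).toLinearMap
      = (LinearMap.mul' k A).rTensor C ∘ₗ (TensorProduct.assoc k A A C).symm.toLinearMap
        ∘ₗ (cocanPsi μ σ).lTensor A ∘ₗ (TensorProduct.assoc k A C A).toLinearMap
        ∘ₗ (cocanPsi μ σ).rTensor A := by
  apply TensorProduct.ext_threefold
  intro c a b
  have h := congrFun (congrArg DFunLike.coe (Lb_eq_Rb μ σ b hμ hσ)) (c ⊗ₜ[k] a)
  simp only [Lb, Inner, coe_comp, Function.comp_apply, lTensor_tmul,
    LinearMap.mulRight_apply, TensorProduct.mk_apply, flip_apply,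
    LinearEquiv.coe_coe] at h
  simpa only [coe_comp, Function.comp_apply, LinearEquiv.coe_coe, assoc_tmul,
    lTensor_tmul, mul'_apply, rTensor_tmul] using h

end GaloisCoext
end B6

/-- the canonical map `ψ = (τ̌ ⊗ C) ∘ (C ⊗ Δ) ∘ cocan` of an
`A`-Galois coextension is an entwining map. -/
theorem cocanPsi_isEntwining (μ : C ⊗[k] A →ₗ[k] C) (hμ : IsAction μ)
    (σ : C ⊗[k] C →ₗ[k] C ⊗[k] A) (hσ : IsCocanInverse μ σ) :
    IsEntwining (cocanPsi μ σ) := by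
  refine ⟨GaloisCoext.axiom1 μ σ hμ hσ, fun c => GaloisCoext.axiom2 μ σ hμ hσ c, ?_, ?_⟩
  · apply TensorProduct.ext'
    intro c a
    have := GaloisCoext.axiom3 μ σ hμ hσ c a
    simpa using this
  · apply TensorProduct.ext'
    intro c a
    have := GaloisCoext.axiom4 μ σ hμ hσ c a
    simpa using this
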